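/- Perfect embezzlement is impossible in the commuting operator framework with a finite-dimensional resource space: if H is a finite-dimensional complex Hilbert space, then there do not exist a unit vector ψ ∈ H and families U, V : Fin 2 → Fin 2 → (H →L[ℂ] H) such that U and V are unitary operator matrices, the families U and V *-commute, and U, V satisfy the perfect embezzlement relations for ψ. -/

import Mathlib

/-!
Write `A k = U k 0` and `X l = V l 0`. Since `∑ k, (A k)† A k = 1` and every `A k` commutes
with every `X l`, the relations `A k (X l ψ) = δ k l • ψ / √2` make the vectors
`X (u 0) ⋯ X (u (n-1)) ψ`, for `u : Fin n → Fin 2`, pairwise orthogonal and nonzero: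
expanding `⟪x, y⟫ = ∑ k, ⟪A k x, A k y⟫` and moving `A k` past the outer letters onto the
innermost one compares two words letter by letter. Hence `2 ^ n ≤ dim H` for every `n`.
-/

open ContinuousLinearMap

/-- A family `U : Fin d → Fin d → (H →L[ℂ] H)` is a unitary operator matrix. -/
def IsUnitaryOpMatrix {H : Type*} [NormedAddCommGroup H] [InnerProductSpace ℂ H]
    [CompleteSpace H] {d : ℕ} (U : Fin d → Fin d → (H →L[ℂ] H)) : Prop :=
  (∀ i j, ∑ k, (adjoint (U k i)) ∘L (U k j) = if i = j then (1 : H →L[ℂ] H) else 0) ∧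
  (∀ i j, ∑ k, (U i k) ∘L (adjoint (U j k)) = if i = j then (1 : H →L[ℂ] H) else 0)

/-- Two families of bounded operators *-commute entrywise. -/
def StarCommuteFamilies {H : Type*} [NormedAddCommGroup H] [InnerProductSpace ℂ H]
    [CompleteSpace H] {d : ℕ} (U V : Fin d → Fin d → (H →L[ℂ] H)) : Prop :=
  ∀ i j k l, (U i j) ∘L (V k l) = (V k l) ∘L (U i j) ∧
    (adjoint (U i j)) ∘L (V k l) = (V k l) ∘L (adjoint (U i j))

open scoped ComplexConjugate InnerProductSpace

namespace PerfectEmbezzlement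

variable {H : Type*} [NormedAddCommGroup H] [InnerProductSpace ℂ H] [CompleteSpace H]
  {ι : Type*} [Fintype ι]

theorem sum_inner_apply_of_sum_adjoint_comp_self_eq_one {A : ι → H →L[ℂ] H}
    (hA : ∑ k, adjoint (A k) ∘L A k = 1) (x y : H) :
    ∑ k, ⟪A k x, A k y⟫_ℂ = ⟪x, y⟫_ℂ := by
  calc ∑ k, ⟪A k x, A k y⟫_ℂ = ⟪x, (∑ k, adjoint (A k) ∘L A k) y⟫_ℂ := by
        simp [sum_apply, adjoint_inner_right]
    _ = ⟪x, y⟫_ℂ := by rw [hA, one_apply_eq_self]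

variable [DecidableEq ι] {A X : ι → H →L[ℂ] H} {ψ : H} {c : ℂ}

theorem inner_apply_apply_eq_ite
    (hA : ∑ k, adjoint (A k) ∘L A k = 1)
    (hAX : ∀ k l, A k (X l ψ) = if k = l then c • ψ else 0)
    {P P' : H →L[ℂ] H} (hP : ∀ k, Commute P (A k)) (hP' : ∀ k, Commute P' (A k))
    (l l' : ι) : ⟪P (X l ψ), P' (X l' ψ)⟫_ℂ = if l = l' then conj c * c * ⟪P ψ, P' ψ⟫_ℂ else 0 := by
  have hPA (Q : H →L[ℂ] H) (hQ : ∀ k, Commute Q (A k)) (k : ι) (x : H) :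
      A k (Q x) = Q (A k x) :=
    congr($((hQ k).eq.symm) x)
  rw [← sum_inner_apply_of_sum_adjoint_comp_self_eq_one hA]
  simp_rw [hPA P hP, hPA P' hP', hAX]
  rw [Fintype.sum_eq_single l fun k hk => by simp [hk]]
  by_cases h : l = l'
  · simp only [h, if_true, map_smul, inner_smul_left, inner_smul_right]
    ring
  · simp [h]

theorem inner_apply_list_prod_ofFn_apply_eq_ite
    (hA : ∑ k, adjoint (A k) ∘L A k = 1)
    (hAX : ∀ k l, A k (X l ψ) = if k = l then c • ψ else 0)
    (hXA : ∀ l k, Commute (X l) (A k)) {n : ℕ} (u u' : Fin n → ι)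
    {P P' : H →L[ℂ] H} (hP : ∀ k, Commute P (A k)) (hP' : ∀ k, Commute P' (A k)) :
    ⟪P ((List.ofFn fun i => X (u i)).prod ψ), P' ((List.ofFn fun i => X (u' i)).prod ψ)⟫_ℂ =
      if u = u' then (conj c * c) ^ n * ⟪P ψ, P' ψ⟫_ℂ else 0 := by
  induction n generalizing P P' with
  | zero => simp [Subsingleton.elim u u']
  | succ n ih =>
    induction u using Fin.consCases with | cons l w => ?_
    induction u' using Fin.consCases with | cons l' w' => ?_
    simp only [List.ofFn_succ, Fin.cons_zero, Fin.cons_succ,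
      List.prod_cons, mul_apply_eq_comp, Fin.cons_inj]
    rw [← mul_apply_eq_comp P, ← mul_apply_eq_comp P',
      ih w w' (fun k => (hP k).mul_left (hXA l k)) (fun k => (hP' k).mul_left (hXA l' k)),
      mul_apply_eq_comp, mul_apply_eq_comp,
      inner_apply_apply_eq_ite hA hAX hP hP' l l']
    by_cases hl : l = l' <;> by_cases hw : w = w' <;> simp [hl, hw, pow_succ, mul_assoc]

theorem card_pow_le_finrank [FiniteDimensional ℂ H]
    (hA : ∑ k, adjoint (A k) ∘L A k = 1)
    (hAX : ∀ k l, A k (X l ψ) = if k = l then c • ψ else 0)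
    (hXA : ∀ l k, Commute (X l) (A k)) (hψ : ψ ≠ 0) (hc : c ≠ 0) (n : ℕ) :
    Fintype.card ι ^ n ≤ Module.finrank ℂ H := by
  have hinner (u u' : Fin n → ι) := inner_apply_list_prod_ofFn_apply_eq_ite hA hAX hXA u u'
    (P := 1) (P' := 1) (fun _ => Commute.one_left _) (fun _ => Commute.one_left _)
  simp only [one_apply_eq_self] at hinner
  have hindep :
      LinearIndependent ℂ fun u : Fin n → ι => (List.ofFn fun i => X (u i)).prod ψ := by
    refine linearIndependent_of_ne_zero_of_inner_eq_zero (fun u hu => ?_)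
      fun u u' huu' => by simp [hinner, huu']
    have hnorm := hinner u u
    rw [hu, inner_zero_left, if_pos rfl] at hnorm
    exact mul_ne_zero (pow_ne_zero _ (mul_ne_zero ((map_ne_zero _).2 hc) hc))
      (inner_self_ne_zero.2 hψ) hnorm.symm
  simpa using hindep.fintype_card_le_finrank

end PerfectEmbezzlement

open PerfectEmbezzlement in
/-- Perfect embezzlement is impossible in the commuting operator framework when the
resource space is finite dimensional. -/
theorem no_perfect_embezzlement_finite_dimensional
    {H : Type*} [NormedAddCommGroup H] [InnerProductSpace ℂ H]
    [FiniteDimensional ℂ H] :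
    ¬ ∃ (ψ : H) (U V : Fin 2 → Fin 2 → (H →L[ℂ] H)),
      ‖ψ‖ = 1 ∧
      IsUnitaryOpMatrix U ∧ IsUnitaryOpMatrix V ∧
      StarCommuteFamilies U V ∧
      U 0 0 (V 0 0 ψ) = (1 / Real.sqrt 2 : ℂ) • ψ ∧
      U 1 0 (V 1 0 ψ) = (1 / Real.sqrt 2 : ℂ) • ψ ∧
      U 0 0 (V 1 0 ψ) = 0 ∧
      U 1 0 (V 0 0 ψ) = 0 := by
  rintro ⟨ψ, U, V, hψ, hU, -, hUV, h00, h11, h01, h10⟩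
  have hA : ∑ k, adjoint (U k 0) ∘L U k 0 = 1 := hU.1 0 0
  have hAX : ∀ k l, U k 0 (V l 0 ψ) = if k = l then (1 / Real.sqrt 2 : ℂ) • ψ else 0 := by
    intro k l
    fin_cases k <;> fin_cases l <;> simp [h00, h11, h01, h10]
  have hXA : ∀ l k, Commute (V l 0) (U k 0) := fun l k => ((hUV k 0 l 0).1).symm
  have hψ0 : ψ ≠ 0 := norm_ne_zero_iff.mp (by simp [hψ])
  have hc : (1 / Real.sqrt 2 : ℂ) ≠ 0 := by simp
  have hbound := card_pow_le_finrank hA hAX hXA hψ0 hc (Module.finrank ℂ H)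
  rw [Fintype.card_fin] at hbound
  exact (Nat.lt_two_pow_self).not_ge hbound
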